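/- arXiv:1810.01229 — 8 statements merged into one kernel-verified Lean document; each statement's English description precedes it below -/
import Mathlib

section
/- Let α, β ∈ ℝ. The sum Z_{α,β,G} := Σ_{ξ ∈ ℤ₊ⁿ} e^{W(ξ)} is finite if and only if α < 0 and α + β λ₁(G) < 0. Equivalently, the function ξ ↦ e^{W(ξ)} on ℤ₊ⁿ is summable if and only if α < 0 and α + β λ₁(G) < 0. -/
open Finset Real

/-- `W(ξ) = (α/2) Σᵢ ξᵢ(ξᵢ−1) + β Σ_{edges i∼j} ξᵢξⱼ`, with the edge sum written as half
the double sum over the entries of the adjacency matrix (each edge is counted twice). -/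
noncomputable def W {n : ℕ} (G : SimpleGraph (Fin n)) [DecidableRel G.Adj]
    (α β : ℝ) (ξ : Fin n → ℕ) : ℝ :=
  α / 2 * ∑ i, (ξ i : ℝ) * ((ξ i : ℝ) - 1)
    + β / 2 * ∑ i, ∑ j, G.adjMatrix ℝ i j * (ξ i : ℝ) * (ξ j : ℝ)

open Matrix

/-! Write `B = α • 1 + β • A`, so that `2 W(ξ) = ⟨Bξ, ξ⟩ - α S(ξ)`.

If `α < 0` and `α + β λ₁ < 0`, then `⟨Bξ, ξ⟩ ≤ max α (α + β λ₁) ‖ξ‖²` on `ℤ₊ⁿ`: for `β > 0` by the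
Rayleigh bound `⟨Aξ, ξ⟩ ≤ λ₁ ‖ξ‖²`, for `β ≤ 0` because `A` and `ξ` are nonnegative. Hence `e^W` is
dominated by a product of one-dimensional Gaussian series.

Conversely, `α ≥ 0` makes `W ≥ 0` along a coordinate axis, and for `β ≤ 0` the condition follows
from `λ₁ ≥ 0` (the diagonal of `A` vanishes). For `β > 0` and `α + β λ₁ ≥ 0`, the entrywise absolute
value of a `λ₁`-eigenvector is a `w ≥ 0` with `Bw ≥ 0` (Perron's inequality `A|v| ≥ |λ₁| |v|`).
At the lattice points `⌈k w⌉ = k w + e` with `0 ≤ e < 1` the form is then at least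
`⟨Be, e⟩ ≥ α n`, so infinitely many terms of the series are at least `e^{α n / 2}`. -/

section RealMatrix

variable {ι : Type*} [Fintype ι]

theorem Matrix.IsHermitian.dotProduct_mulVec_le_of_mem_upperBounds [DecidableEq ι]
    {A : Matrix ι ι ℝ} (hA : A.IsHermitian) {lam : ℝ}
    (hlam : lam ∈ upperBounds {μ | ∃ v : ι → ℝ, v ≠ 0 ∧ A *ᵥ v = μ • v}) (x : ι → ℝ) :
    x ⬝ᵥ (A *ᵥ x) ≤ lam * (x ⬝ᵥ x) := by
  have hM : (lam • 1 - A).IsHermitian := by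
    rw [IsHermitian, conjTranspose_sub, conjTranspose_smul, conjTranspose_one, hA.eq, star_trivial]
  -- each eigenvalue `ν` of `lam • 1 - A` comes from the eigenvalue `lam - ν ≤ lam` of `A`
  have hpsd : (lam • 1 - A).PosSemidef := by
    refine hM.posSemidef_iff_eigenvalues_nonneg.2 fun j => ?_
    have hu := hM.mulVec_eigenvectorBasis j
    have hu0 : (⇑(hM.eigenvectorBasis j) : ι → ℝ) ≠ 0 := fun h =>
      (hM.eigenvectorBasis.orthonormal.ne_zero j) (by ext k; exact congrFun h k)
    rw [sub_mulVec, smul_mulVec, one_mulVec] at hu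
    have : lam - hM.eigenvalues j ≤ lam := hlam ⟨_, hu0, by rw [sub_smul, ← hu]; abel⟩
    simp only [Pi.zero_apply]; linarith
  have := hpsd.dotProduct_mulVec_nonneg x
  simpa [sub_mulVec, smul_mulVec, dotProduct_sub] using this

theorem Matrix.mulVec_nonneg_of_nonneg {A : Matrix ι ι ℝ}
    (hA : ∀ i j, 0 ≤ A i j) {x : ι → ℝ} (hx : 0 ≤ x) : 0 ≤ A *ᵥ x :=
  fun i => dotProduct_nonneg_of_nonneg (hA i) hx

theorem Matrix.dotProduct_smul_one_add_smul_mulVec [DecidableEq ι] (A : Matrix ι ι ℝ) (α β : ℝ)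
    (x : ι → ℝ) :
    x ⬝ᵥ ((α • 1 + β • A) *ᵥ x) = α * (x ⬝ᵥ x) + β * (x ⬝ᵥ (A *ᵥ x)) := by
  simp [add_mulVec, smul_mulVec, dotProduct_add]

theorem Matrix.abs_smul_abs_le_mulVec_abs {A : Matrix ι ι ℝ} (hA : ∀ i j, 0 ≤ A i j) {μ : ℝ}
    {v : ι → ℝ} (hv : A *ᵥ v = μ • v) : |μ| • |v| ≤ A *ᵥ |v| := fun i => by
  calc (|μ| • |v|) i = |(A *ᵥ v) i| := by simp [hv, abs_mul]
    _ ≤ ∑ j, |A i j * v j| := abs_sum_le_sum_abs _ _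
    _ = (A *ᵥ |v|) i := by simp [mulVec, dotProduct, abs_mul, abs_of_nonneg (hA _ _)]

theorem Matrix.exists_nonneg_smul_le_mulVec {A : Matrix ι ι ℝ} (hA : ∀ i j, 0 ≤ A i j) {μ : ℝ}
    {v : ι → ℝ} (hv0 : v ≠ 0) (hv : A *ᵥ v = μ • v) :
    ∃ w : ι → ℝ, ∃ i, 0 ≤ w ∧ w i = 1 ∧ μ • w ≤ A *ᵥ w := by
  obtain ⟨i, hi⟩ := Function.ne_iff.1 hv0
  have hc : 0 < |v i|⁻¹ := inv_pos.2 (abs_pos.2 hi)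
  refine ⟨|v i|⁻¹ • |v|, i, smul_nonneg hc.le (abs_nonneg v),
    by simp [inv_mul_cancel₀ (abs_ne_zero.2 hi)], ?_⟩
  rw [mulVec_smul, smul_comm]
  refine smul_le_smul_of_nonneg_left ?_ hc.le
  exact (smul_le_smul_of_nonneg_right (le_abs_self μ) (abs_nonneg v)).trans
    (abs_smul_abs_le_mulVec_abs hA hv)

theorem dotProduct_mulVec_le_add_smul {B : Matrix ι ι ℝ} (hB : B.IsSymm) {w e : ι → ℝ}
    (hw : 0 ≤ w) (hBw : 0 ≤ B *ᵥ w) (he : 0 ≤ e) {t : ℝ} (ht : 0 ≤ t) :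
    e ⬝ᵥ (B *ᵥ e) ≤ (t • w + e) ⬝ᵥ (B *ᵥ (t • w + e)) := by
  have hsymm : w ⬝ᵥ (B *ᵥ e) = e ⬝ᵥ (B *ᵥ w) := by
    rw [dotProduct_mulVec, ← mulVec_transpose, hB.eq, dotProduct_comm]
  have hww := dotProduct_nonneg_of_nonneg hw hBw
  have hew := dotProduct_nonneg_of_nonneg he hBw
  simp only [mulVec_add, mulVec_smul, dotProduct_add, add_dotProduct, dotProduct_smul,
    smul_dotProduct, smul_eq_mul, hsymm]
  nlinarith [mul_nonneg (mul_nonneg ht ht) hww, mul_nonneg ht hew]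

end RealMatrix

theorem SimpleGraph.adjMatrix_nonneg {V : Type*} (G : SimpleGraph V) [DecidableRel G.Adj]
    (i j : V) : 0 ≤ G.adjMatrix ℝ i j := by
  rw [adjMatrix_apply]; split <;> norm_num

theorem SimpleGraph.nonneg_of_mem_upperBounds_eigenvalues {V : Type*} [Fintype V] [DecidableEq V]
    [Nonempty V] (G : SimpleGraph V) [DecidableRel G.Adj] {lam : ℝ}
    (hlam : lam ∈ upperBounds {μ | ∃ v : V → ℝ, v ≠ 0 ∧ G.adjMatrix ℝ *ᵥ v = μ • v}) :
    0 ≤ lam := by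
  simpa using (G.isHermitian_adjMatrix ℝ).dotProduct_mulVec_le_of_mem_upperBounds hlam
    (Pi.single (Classical.arbitrary V) 1)

theorem summable_exp_mul_sq_add_mul {a : ℝ} (ha : a < 0) (b : ℝ) :
    Summable fun k : ℕ => exp (a * k ^ 2 + b * k) := by
  refine (summable_exp_neg_nat.mul_left (exp ((b + 1) ^ 2 / (-4 * a)))).of_nonneg_of_le
    (fun _ => (exp_pos _).le) fun k => ?_
  have : a * k ^ 2 + (b + 1) * k ≤ (b + 1) ^ 2 / (-4 * a) := by
    rw [le_div_iff₀ (by linarith)]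
    nlinarith [sq_nonneg (2 * a * k + (b + 1))]
  rw [← exp_add, exp_le_exp]
  linarith

theorem summable_pi_prod_of_nonneg {κ : Type*} {f : κ → ℝ} (hf0 : 0 ≤ f) (hf : Summable f) (m : ℕ) :
    Summable fun ξ : Fin m → κ => ∏ i, f (ξ i) := by
  induction m with
  | zero => exact Summable.of_finite
  | succ m ih =>
    refine (Fin.consEquiv fun _ => κ).summable_iff.1 ?_
    refine (hf.mul_of_nonneg ih (fun k => hf0 k) fun ξ => prod_nonneg fun i _ => hf0 _).congr ?_
    intro p
    simp [Fin.consEquiv, Fin.prod_univ_succ]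

theorem not_summable_of_le_comp_injective {ι : Type*} {f : ι → ℝ} {g : ℕ → ι}
    (hg : g.Injective) {c : ℝ} (hc : 0 < c) (h : ∀ k, c ≤ f (g k)) : ¬ Summable f := fun hf =>
  have ⟨k, hk⟩ := ((hf.comp_injective hg).tendsto_atTop_zero.eventually_lt_const hc).exists
  (h k).not_gt hk

section Energy

variable {n : ℕ} (G : SimpleGraph (Fin n)) [DecidableRel G.Adj]

theorem two_mul_W (α β : ℝ) (ξ : Fin n → ℕ) :
    2 * W G α β ξ = α * ((fun i => (ξ i : ℝ)) ⬝ᵥ fun i => (ξ i : ℝ))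
      + β * ((fun i => (ξ i : ℝ)) ⬝ᵥ (G.adjMatrix ℝ *ᵥ fun i => (ξ i : ℝ)))
      - α * ∑ i, (ξ i : ℝ) := by
  have hA : ((fun i => (ξ i : ℝ)) ⬝ᵥ (G.adjMatrix ℝ *ᵥ fun i => (ξ i : ℝ)))
      = ∑ i, ∑ j, G.adjMatrix ℝ i j * (ξ i : ℝ) * (ξ j : ℝ) := by
    simp only [dotProduct, mulVec, mul_sum]
    exact sum_congr rfl fun i _ => sum_congr rfl fun j _ => by ring
  have hx : ∑ i, (ξ i : ℝ) * ((ξ i : ℝ) - 1)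
      = ((fun i => (ξ i : ℝ)) ⬝ᵥ fun i => (ξ i : ℝ)) - ∑ i, (ξ i : ℝ) := by
    simp [dotProduct, mul_sub, sum_sub_distrib]
  rw [W, hA, hx]
  ring

theorem W_single (α β : ℝ) (i : Fin n) (k : ℕ) :
    W G α β (Pi.single i k) = α / 2 * (k * (k - 1)) := by
  simp [W, Pi.single_apply, apply_ite, ite_mul]

theorem neg_of_summable_exp_W (β : ℝ) {α : ℝ} (i : Fin n)
    (hs : Summable fun ξ => exp (W G α β ξ)) : α < 0 := by
  by_contra! hα
  refine not_summable_of_le_comp_injective (Pi.single_injective (M := fun _ => ℕ) i) one_pos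
    (fun k => ?_) hs
  rw [W_single, one_le_exp_iff]
  rcases k with _ | k
  · simp
  · push_cast
    rw [add_sub_cancel_right]
    positivity

theorem W_le_sum {α β lam : ℝ}
    (hlam : lam ∈ upperBounds {μ | ∃ v : Fin n → ℝ, v ≠ 0 ∧ G.adjMatrix ℝ *ᵥ v = μ • v})
    (ξ : Fin n → ℕ) :
    W G α β ξ ≤ ∑ i, (max α (α + β * lam) / 2 * (ξ i : ℝ) ^ 2 + -α / 2 * ξ i) := by
  set x : Fin n → ℝ := fun i => (ξ i : ℝ)
  have hx : 0 ≤ x := fun i => Nat.cast_nonneg _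
  have hxx : 0 ≤ x ⬝ᵥ x := dotProduct_nonneg_of_nonneg hx hx
  have hAx : 0 ≤ x ⬝ᵥ (G.adjMatrix ℝ *ᵥ x) :=
    dotProduct_nonneg_of_nonneg hx (mulVec_nonneg_of_nonneg G.adjMatrix_nonneg hx)
  have hray := (G.isHermitian_adjMatrix ℝ).dotProduct_mulVec_le_of_mem_upperBounds hlam x
  have hβ : β * (x ⬝ᵥ (G.adjMatrix ℝ *ᵥ x)) ≤ max 0 (β * lam) * (x ⬝ᵥ x) := by
    rcases le_or_gt β 0 with hβ | hβ
    · nlinarith [le_max_left 0 (β * lam)]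
    · nlinarith [le_max_right 0 (β * lam)]
  have hsum : ∑ i, (max α (α + β * lam) / 2 * (ξ i : ℝ) ^ 2 + -α / 2 * ξ i)
      = (max α (α + β * lam) * (x ⬝ᵥ x) - α * ∑ i, x i) / 2 := by
    simp only [x, dotProduct, sum_add_distrib, ← mul_sum, ← sq]
    ring
  have := two_mul_W G α β ξ
  have hmax : max α (α + β * lam) = α + max 0 (β * lam) := by
    rw [← max_add_add_left, add_zero]
  rw [hsum, hmax]
  nlinarith

theorem summable_exp_W {α β lam : ℝ}
    (hlam : lam ∈ upperBounds {μ | ∃ v : Fin n → ℝ, v ≠ 0 ∧ G.adjMatrix ℝ *ᵥ v = μ • v})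
    (hneg : max α (α + β * lam) < 0) : Summable fun ξ => exp (W G α β ξ) := by
  have hgauss := summable_exp_mul_sq_add_mul (a := max α (α + β * lam) / 2) (by linarith) (-α / 2)
  refine (summable_pi_prod_of_nonneg (fun _ => (exp_pos _).le) hgauss n).of_nonneg_of_le
    (fun _ => (exp_pos _).le) fun ξ => ?_
  rw [← exp_sum, exp_le_exp]
  exact W_le_sum G hlam ξ

theorem W_ceil_ge {α β : ℝ} (hα : α ≤ 0) (hβ : 0 ≤ β) {w : Fin n → ℝ} (hw : 0 ≤ w)
    (hBw : 0 ≤ (α • 1 + β • G.adjMatrix ℝ) *ᵥ w) (k : ℕ) :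
    α * n / 2 ≤ W G α β fun i => ⌈k * w i⌉₊ := by
  have hB : (α • 1 + β • G.adjMatrix ℝ).IsSymm :=
    (isSymm_one.smul α).add (G.isSymm_adjMatrix.smul β)
  set x : Fin n → ℝ := fun i => (⌈k * w i⌉₊ : ℝ)
  set e := x - (k : ℝ) • w
  have he0 : 0 ≤ e := fun i => sub_nonneg.2 (Nat.le_ceil _)
  have he1 : e ≤ 1 := fun i => by
    have := Nat.ceil_lt_add_one (mul_nonneg k.cast_nonneg (hw i))
    simp only [e, x, Pi.sub_apply, Pi.smul_apply, smul_eq_mul, Pi.one_apply]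
    linarith
  have hee : e ⬝ᵥ e ≤ n :=
    calc e ⬝ᵥ e ≤ ∑ _i : Fin n, (1 : ℝ) :=
          sum_le_sum fun i _ => mul_le_one₀ (he1 i) (he0 i) (he1 i)
      _ = n := by simp
  have hAe : 0 ≤ e ⬝ᵥ (G.adjMatrix ℝ *ᵥ e) :=
    dotProduct_nonneg_of_nonneg he0 (mulVec_nonneg_of_nonneg G.adjMatrix_nonneg he0)
  have hS : 0 ≤ ∑ i, x i := sum_nonneg fun i _ => Nat.cast_nonneg _
  have hquad := dotProduct_mulVec_le_add_smul hB hw hBw he0 k.cast_nonneg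
  rw [add_sub_cancel, dotProduct_smul_one_add_smul_mulVec,
    dotProduct_smul_one_add_smul_mulVec] at hquad
  have := two_mul_W G α β fun i => ⌈k * w i⌉₊
  nlinarith

theorem not_summable_exp_W {α β lam : ℝ} (hα : α ≤ 0) (hβ : 0 ≤ β) (h : 0 ≤ α + β * lam)
    {v : Fin n → ℝ} (hv0 : v ≠ 0) (hv : G.adjMatrix ℝ *ᵥ v = lam • v) :
    ¬ Summable fun ξ => exp (W G α β ξ) := by
  obtain ⟨w, i, hw0, hwi, hAw⟩ := exists_nonneg_smul_le_mulVec G.adjMatrix_nonneg hv0 hv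
  have hBw : 0 ≤ (α • 1 + β • G.adjMatrix ℝ) *ᵥ w := fun j => by
    have := mul_le_mul_of_nonneg_left (hAw j) hβ
    simp only [add_mulVec, smul_mulVec, one_mulVec, Pi.add_apply, Pi.smul_apply, smul_eq_mul,
      Pi.zero_apply] at this ⊢
    nlinarith [mul_nonneg h (hw0 j)]
  have hinj : Function.Injective fun (k : ℕ) (j : Fin n) => ⌈k * w j⌉₊ := fun k l hkl => by
    simpa [hwi] using congrFun hkl i
  exact not_summable_of_le_comp_injective hinj (exp_pos (α * n / 2))
    fun k => exp_le_exp.2 (W_ceil_ge G hα hβ hw0 hBw k)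

end Energy

theorem stmt1_general {n : ℕ} (G : SimpleGraph (Fin n)) [DecidableRel G.Adj]
    (α β : ℝ) (lam1 : ℝ)
    (hlam : IsGreatest
      {μ : ℝ | ∃ v : Fin n → ℝ, v ≠ 0 ∧ (G.adjMatrix ℝ).mulVec v = μ • v} lam1) :
    Summable (fun ξ : Fin n → ℕ => Real.exp (W G α β ξ)) ↔ α < 0 ∧ α + β * lam1 < 0 := by
  obtain ⟨v, hv0, hv⟩ := hlam.1
  obtain ⟨i, -⟩ := Function.ne_iff.1 hv0
  have : Nonempty (Fin n) := ⟨i⟩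
  constructor
  · intro hs
    have hα : α < 0 := neg_of_summable_exp_W G β i hs
    refine ⟨hα, ?_⟩
    by_contra! h
    rcases le_or_gt β 0 with hβ | hβ
    · nlinarith [G.nonneg_of_mem_upperBounds_eigenvalues hlam.2]
    · exact not_summable_exp_W G hα.le hβ.le h hv0 hv hs
  · rintro ⟨hα, h⟩
    exact summable_exp_W G hlam.2 (max_lt hα h)

/-- `Z_{α,β,G} = Σ_{ξ ∈ ℤ₊ⁿ} e^{W(ξ)} < ∞` iff `α < 0` and `α + β λ₁(G) < 0`,
where `λ₁(G)` is the largest eigenvalue of the adjacency matrix of `G`. -/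
theorem stmt1 {n : ℕ} (hn : 0 < n) (G : SimpleGraph (Fin n)) [DecidableRel G.Adj]
    (α β : ℝ) (lam1 : ℝ)
    (hlam : IsGreatest
      {μ : ℝ | ∃ v : Fin n → ℝ, v ≠ 0 ∧ (G.adjMatrix ℝ).mulVec v = μ • v} lam1) :
    Summable (fun ξ : Fin n → ℕ => Real.exp (W G α β ξ)) ↔ α < 0 ∧ α + β * lam1 < 0 :=
  stmt1_general G α β lam1 hlam
end

section
/- Let α, β ∈ ℝ. For ξ ∈ ℤ₊ⁿ define C̃_ξ := Σ_{i=1}^n e^{W(ξ) + α ξᵢ} + Σ_{i : ξᵢ > 0} e^{W(ξ) − β (Aξ)ᵢ} (the total conductance at ξ in the modified model). Then the sum Σ_{ξ ∈ ℤ₊ⁿ} C̃_ξ is finite if and only if α < 0 and α + β λ₁(G) < 0. -/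
open Finset Real

/-- Total conductance at `ξ` in the modified model:
`C̃_ξ = Σᵢ e^{W(ξ)+αξᵢ} + Σ_{i : ξᵢ>0} e^{W(ξ)−β(Aξ)ᵢ}`. -/
noncomputable def Ctilde {n : ℕ} (G : SimpleGraph (Fin n)) [DecidableRel G.Adj]
    (α β : ℝ) (ξ : Fin n → ℕ) : ℝ :=
  (∑ i, Real.exp (W G α β ξ + α * (ξ i : ℝ)))
    + ∑ i ∈ Finset.univ.filter (fun i => 0 < ξ i),
        Real.exp (W G α β ξ - β * (G.adjMatrix ℝ).mulVec (fun j => (ξ j : ℝ)) i)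

/-!
Write `x = ξ`, `S = ∑ xᵢ` and `Q(x) = α ⟪x, x⟫ + β ⟪x, A x⟫`, so that `W = Q / 2 - α S / 2`. As `λ₁`
is the top eigenvalue of the symmetric matrix `A`, the matrix `λ₁ I - A` is positive semidefinite.

If `α < 0` and `α + β λ₁ < 0`, then `Q(x) ≤ max α (α + β λ₁) ⟪x, x⟫` on the nonnegative orthant, so
every conductance at `ξ` is at most a constant times `exp (-S)`, which is summable over `ℕⁿ`.

If `α ≥ 0`, the conductances along an axis are at least `1`. If `α < 0 ≤ α + β λ₁`, the absolute
value `w` of a top eigenvector is again a top eigenvector (equality case of the Rayleigh bound),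
and the lattice points `x = ⌈m w⌉ = m w + δ`, `δ ∈ [0, 1]ⁿ`, satisfy
`Q(x) = (α + β λ₁) ⟪x, x⟫ - β ⟪δ, (λ₁ I - A) δ⟫`, which is bounded below. Since `λ₁ ≠ 0`, `G` has
an edge, so the smallest coordinate of `x` is at most `S / 2`, and the conductance there stays
above a positive constant.
-/

open Matrix Filter Topology

theorem exists_two_mul_le_sum {ι : Type*} [Fintype ι] [Nontrivial ι] (x : ι → ℝ) (hx : 0 ≤ x) :
    ∃ i, 2 * x i ≤ ∑ j, x j := by
  obtain ⟨i, -, hi⟩ := exists_min_image univ x univ_nonempty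
  obtain ⟨j, hj⟩ := exists_ne i
  refine ⟨i, ?_⟩
  have := add_le_sum (fun k _ => hx k) (mem_univ i) (mem_univ j) hj.symm
  linarith [hi j (mem_univ j)]

theorem not_summable_of_tendsto_apply {ι : Type*} {g : (ι → ℕ) → ℝ} {F : ℕ → ι → ℕ} (i : ι)
    (hF : Tendsto (fun m => F m i) atTop atTop) {ε : ℝ} (hε : 0 < ε) (hg : ∀ m, ε ≤ g (F m)) :
    ¬ Summable g := by
  intro hs
  have hF' : Tendsto F atTop cofinite := le_cofinite_iff_eventually_ne.mpr fun ξ =>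
    (hF.eventually_gt_atTop (ξ i)).mono fun m hm h => hm.ne' (by rw [h])
  exact hε.not_ge (ge_of_tendsto' (hs.tendsto_cofinite_zero.comp hF') hg)

theorem summable_prod_apply {α : Type*} {f : α → ℝ} (hf : Summable f) (hf0 : 0 ≤ f) (n : ℕ) :
    Summable fun ξ : Fin n → α => ∏ i, f (ξ i) := by
  induction n with
  | zero => exact .of_finite
  | succ n ih =>
    have h := hf.mul_of_nonneg ih hf0 fun ξ => prod_nonneg fun i _ => hf0 _
    rw [← (Fin.consEquiv fun _ => α).symm.summable_iff] at h
    simpa [Function.comp_def, Fin.prod_univ_succ, Fin.consEquiv, Fin.tail] using h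

theorem quadratic_le_const_sub (C : ℝ) {c : ℝ} (hc : c < 0) (t : ℝ) :
    c / 2 * t ^ 2 + C * t ≤ (C + 1) ^ 2 / (-2 * c) - t := by
  rw [le_sub_iff_add_le, le_div_iff₀ (by linarith)]
  nlinarith [sq_nonneg (c * t + (C + 1))]

section TopEigenvalue

variable {ι : Type*} [Fintype ι] {M : Matrix ι ι ℝ} {lam : ℝ}

theorem dotProduct_mulVec_le_abs (hM : ∀ i j, 0 ≤ M i j) (x : ι → ℝ) :
    x ⬝ᵥ M *ᵥ x ≤ |x| ⬝ᵥ M *ᵥ |x| := by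
  simp only [dotProduct, mulVec, Finset.mul_sum, Pi.abs_apply]
  refine sum_le_sum fun i _ => sum_le_sum fun j _ => ?_
  calc x i * (M i j * x j) ≤ |x i * (M i j * x j)| := le_abs_self _
    _ = |x i| * (M i j * |x j|) := by rw [abs_mul, abs_mul, abs_of_nonneg (hM i j)]

theorem dotProduct_mulVec_add_of_mulVec_eq_zero {P : Matrix ι ι ℝ} (hP : Pᵀ = P) {w : ι → ℝ}
    (hw : P *ᵥ w = 0) (δ : ι → ℝ) : (w + δ) ⬝ᵥ P *ᵥ (w + δ) = δ ⬝ᵥ P *ᵥ δ := by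
  rw [mulVec_add, hw, zero_add, add_dotProduct, dotProduct_mulVec w, ← mulVec_transpose, hP, hw,
    zero_dotProduct, zero_add]

variable [DecidableEq ι]

theorem dotProduct_smul_one_sub_mulVec (x : ι → ℝ) :
    x ⬝ᵥ (lam • 1 - M) *ᵥ x = lam * (x ⬝ᵥ x) - x ⬝ᵥ M *ᵥ x := by
  rw [sub_mulVec, smul_mulVec, one_mulVec, dotProduct_sub, dotProduct_smul, smul_eq_mul]

theorem dotProduct_mulVec_smul_add_of_mulVec_eq (hM : Mᵀ = M) {w : ι → ℝ}
    (hw : M *ᵥ w = lam • w) (t : ℝ) (δ : ι → ℝ) :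
    (t • w + δ) ⬝ᵥ M *ᵥ (t • w + δ)
      = lam * ((t • w + δ) ⬝ᵥ (t • w + δ)) - δ ⬝ᵥ (lam • 1 - M) *ᵥ δ := by
  have hP : (lam • 1 - M)ᵀ = lam • 1 - M := by
    rw [transpose_sub, transpose_smul, transpose_one, hM]
  have hPw : (lam • 1 - M) *ᵥ (t • w) = 0 := by
    rw [mulVec_smul, sub_mulVec, smul_mulVec, one_mulVec, hw, sub_self, smul_zero]
  rw [← dotProduct_mulVec_add_of_mulVec_eq_zero hP hPw δ, dotProduct_smul_one_sub_mulVec]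
  ring

theorem posSemidef_smul_one_sub_of_isGreatest (hM : M.IsHermitian)
    (hlam : IsGreatest {μ : ℝ | ∃ v : ι → ℝ, v ≠ 0 ∧ M *ᵥ v = μ • v} lam) :
    (lam • 1 - M).PosSemidef := by
  have hP : (lam • 1 - M).IsHermitian := (isHermitian_one.smul (IsSelfAdjoint.all lam)).sub hM
  refine hP.posSemidef_iff_eigenvalues_nonneg.mpr fun i => ?_
  have hu := hP.mulVec_eigenvectorBasis i
  rw [sub_mulVec, smul_mulVec, one_mulVec, sub_eq_iff_eq_add, ← sub_eq_iff_eq_add',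
    ← sub_smul] at hu
  have := hlam.2 ⟨_, fun h => hP.eigenvectorBasis.orthonormal.ne_zero i (by simpa using h), hu.symm⟩
  show 0 ≤ hP.eigenvalues i
  linarith

theorem dotProduct_mulVec_le_of_isGreatest (hM : M.IsHermitian)
    (hlam : IsGreatest {μ : ℝ | ∃ v : ι → ℝ, v ≠ 0 ∧ M *ᵥ v = μ • v} lam) (x : ι → ℝ) :
    x ⬝ᵥ M *ᵥ x ≤ lam * (x ⬝ᵥ x) := by
  have := (posSemidef_smul_one_sub_of_isGreatest hM hlam).dotProduct_mulVec_nonneg x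
  rw [star_trivial, dotProduct_smul_one_sub_mulVec] at this
  linarith

theorem exists_nonneg_eigenvector_of_isGreatest (hM : M.IsHermitian) (hM0 : ∀ i j, 0 ≤ M i j)
    (hlam : IsGreatest {μ : ℝ | ∃ v : ι → ℝ, v ≠ 0 ∧ M *ᵥ v = μ • v} lam) :
    ∃ w : ι → ℝ, w ≠ 0 ∧ 0 ≤ w ∧ M *ᵥ w = lam • w := by
  obtain ⟨v, hv0, hv⟩ := hlam.1
  have hP := posSemidef_smul_one_sub_of_isGreatest hM hlam
  refine ⟨|v|, by simpa using hv0, abs_nonneg v, ?_⟩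
  have hPv : |v| ⬝ᵥ (lam • 1 - M) *ᵥ |v| ≤ 0 := by
    have h1 : |v| ⬝ᵥ |v| = v ⬝ᵥ v := by simp [dotProduct, Pi.abs_apply, abs_mul_abs_self]
    have h2 : v ⬝ᵥ M *ᵥ v = lam * (v ⬝ᵥ v) := by rw [hv, dotProduct_smul, smul_eq_mul]
    rw [dotProduct_smul_one_sub_mulVec, h1]
    linarith [dotProduct_mulVec_le_abs hM0 v]
  have hzero := (hP.dotProduct_mulVec_zero_iff |v|).mp
    (by rw [star_trivial]; exact le_antisymm hPv (by simpa using hP.dotProduct_mulVec_nonneg |v|))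
  rwa [sub_mulVec, smul_mulVec, one_mulVec, sub_eq_zero, eq_comm] at hzero

theorem add_mul_dotProduct_mulVec_le_max (hM : M.IsHermitian) (hM0 : ∀ i j, 0 ≤ M i j)
    (hlam : IsGreatest {μ : ℝ | ∃ v : ι → ℝ, v ≠ 0 ∧ M *ᵥ v = μ • v} lam) {x : ι → ℝ}
    (hx : 0 ≤ x) (α β : ℝ) :
    α * (x ⬝ᵥ x) + β * (x ⬝ᵥ M *ᵥ x) ≤ max α (α + β * lam) * (x ⬝ᵥ x) := by
  have hxx : 0 ≤ x ⬝ᵥ x := sum_nonneg fun i _ => mul_self_nonneg (x i)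
  rcases le_or_gt 0 β with hβ | hβ
  · have := mul_le_mul_of_nonneg_left (dotProduct_mulVec_le_of_isGreatest hM hlam x) hβ
    nlinarith [mul_le_mul_of_nonneg_right (le_max_right α (α + β * lam)) hxx]
  · have hxMx : 0 ≤ x ⬝ᵥ M *ᵥ x :=
      sum_nonneg fun i _ => mul_nonneg (hx i) (sum_nonneg fun j _ => mul_nonneg (hM0 i j) (hx j))
    nlinarith [mul_le_mul_of_nonneg_right (le_max_left α (α + β * lam)) hxx]

end TopEigenvalue

namespace SimpleGraph

variable {V : Type*} (G : SimpleGraph V) [DecidableRel G.Adj]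

theorem adjMatrix_nonneg_s4 (i j : V) : 0 ≤ G.adjMatrix ℝ i j := by
  by_cases h : G.Adj i j <;> simp [adjMatrix_apply, h]

variable [Fintype V]

theorem nontrivial_of_adjMatrix_mulVec_ne_zero {v : V → ℝ} (hv : G.adjMatrix ℝ *ᵥ v ≠ 0) :
    Nontrivial V := by
  by_contra h
  rw [not_nontrivial_iff_subsingleton] at h
  refine hv (funext fun i => ?_)
  simp [adjMatrix_mulVec_apply, Subsingleton.elim _ i]

theorem adjMatrix_mulVec_apply_mem_Icc {x : V → ℝ} (hx : 0 ≤ x) (i : V) :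
    (G.adjMatrix ℝ *ᵥ x) i ∈ Set.Icc 0 (∑ j, x j) := by
  rw [adjMatrix_mulVec_apply]
  exact ⟨sum_nonneg fun j _ => hx j, sum_le_sum_of_subset_of_nonneg (subset_univ _)
    fun j _ _ => hx j⟩

end SimpleGraph

section ModifiedModel

variable {n : ℕ} (G : SimpleGraph (Fin n)) [DecidableRel G.Adj] {α β lam : ℝ}

theorem W_eq (ξ : Fin n → ℕ) :
    W G α β ξ = (α * ((fun j => (ξ j : ℝ)) ⬝ᵥ fun j => (ξ j : ℝ))
      + β * ((fun j => (ξ j : ℝ)) ⬝ᵥ G.adjMatrix ℝ *ᵥ fun j => (ξ j : ℝ))) / 2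
      - α / 2 * ∑ j, (ξ j : ℝ) := by
  have h₁ : ∑ i, (ξ i : ℝ) * ((ξ i : ℝ) - 1)
      = ((fun j => (ξ j : ℝ)) ⬝ᵥ fun j => (ξ j : ℝ)) - ∑ j, (ξ j : ℝ) := by
    simp only [dotProduct, mul_sub, mul_one, sum_sub_distrib]
  have h₂ : ∑ i, ∑ j, G.adjMatrix ℝ i j * (ξ i : ℝ) * (ξ j : ℝ)
      = (fun j => (ξ j : ℝ)) ⬝ᵥ G.adjMatrix ℝ *ᵥ fun j => (ξ j : ℝ) := by
    simp only [dotProduct, mulVec, mul_sum]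
    exact sum_congr rfl fun i _ => sum_congr rfl fun j _ => by ring
  rw [W, h₁, h₂]
  ring

theorem Ctilde_nonneg (ξ : Fin n → ℕ) : 0 ≤ Ctilde G α β ξ := by
  unfold Ctilde; positivity

theorem exp_le_Ctilde (ξ : Fin n → ℕ) (i : Fin n) :
    exp (W G α β ξ + α * ξ i) ≤ Ctilde G α β ξ :=
  (single_le_sum (f := fun i => exp (W G α β ξ + α * ξ i)) (fun _ _ => (exp_pos _).le)
    (mem_univ i)).trans (le_add_of_nonneg_right (sum_nonneg fun _ _ => (exp_pos _).le))

theorem Ctilde_le (hα : α ≤ 0) (ξ : Fin n → ℕ) :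
    Ctilde G α β ξ ≤ 2 * n * exp (W G α β ξ + |β| * ∑ j, (ξ j : ℝ)) := by
  set E := W G α β ξ + |β| * ∑ j, (ξ j : ℝ)
  have hx : 0 ≤ fun j => (ξ j : ℝ) := fun j => (ξ j).cast_nonneg
  have hS : 0 ≤ |β| * ∑ j, (ξ j : ℝ) := mul_nonneg (abs_nonneg β) (sum_nonneg fun j _ => hx j)
  have h₁ (i : Fin n) : exp (W G α β ξ + α * ξ i) ≤ exp E :=
    exp_le_exp.mpr (by nlinarith [hx i])
  have h₂ (i : Fin n) : exp (W G α β ξ - β * (G.adjMatrix ℝ *ᵥ fun j => (ξ j : ℝ)) i) ≤ exp E := by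
    obtain ⟨hA₀, hA₁⟩ := G.adjMatrix_mulVec_apply_mem_Icc hx i
    exact exp_le_exp.mpr (by nlinarith [neg_abs_le β, abs_nonneg β])
  calc Ctilde G α β ξ ≤ ∑ _i : Fin n, exp E + ∑ _i : Fin n, exp E := by
        refine add_le_add (sum_le_sum fun i _ => h₁ i) ?_
        exact (sum_le_sum_of_subset_of_nonneg (filter_subset _ _) fun _ _ _ => (exp_pos _).le).trans
          (sum_le_sum fun i _ => h₂ i)
    _ = 2 * n * exp E := by simp; ring

theorem exists_W_add_le (hα : α < 0) (hαβ : α + β * lam < 0)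
    (hlam : IsGreatest {μ : ℝ | ∃ v : Fin n → ℝ, v ≠ 0 ∧ G.adjMatrix ℝ *ᵥ v = μ • v} lam) :
    ∃ D : ℝ, ∀ ξ : Fin n → ℕ, W G α β ξ + |β| * ∑ j, (ξ j : ℝ) ≤ D - ∑ j, (ξ j : ℝ) := by
  have hc : max α (α + β * lam) < 0 := max_lt hα hαβ
  refine ⟨n * ((-α / 2 + |β| + 1) ^ 2 / (-2 * max α (α + β * lam))), fun ξ => ?_⟩
  have hQ := add_mul_dotProduct_mulVec_le_max (G.isHermitian_adjMatrix ℝ) G.adjMatrix_nonneg_s4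
    hlam (fun j => (ξ j).cast_nonneg) α β
  have hsum := sum_le_sum fun j (_ : j ∈ univ) => quadratic_le_const_sub (-α / 2 + |β|) hc (ξ j : ℝ)
  simp only [sum_add_distrib, sum_sub_distrib, ← mul_sum, sum_const, card_univ,
    Fintype.card_fin, nsmul_eq_mul] at hsum
  rw [W_eq]
  simp only [dotProduct, ← sq] at hQ ⊢
  linarith

theorem summable_Ctilde (hα : α < 0) (hαβ : α + β * lam < 0)
    (hlam : IsGreatest {μ : ℝ | ∃ v : Fin n → ℝ, v ≠ 0 ∧ G.adjMatrix ℝ *ᵥ v = μ • v} lam) :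
    Summable (Ctilde G α β) := by
  obtain ⟨D, hD⟩ := exists_W_add_le G hα hαβ hlam
  refine ((summable_prod_apply summable_exp_neg_nat (fun _ => (exp_pos _).le) n).mul_left
    (2 * n * exp D)).of_nonneg_of_le (Ctilde_nonneg G) fun ξ => ?_
  calc Ctilde G α β ξ ≤ 2 * n * exp (W G α β ξ + |β| * ∑ j, (ξ j : ℝ)) := Ctilde_le G hα.le ξ
    _ ≤ 2 * n * exp (D - ∑ j, (ξ j : ℝ)) := by gcongr; exact hD ξ
    _ = 2 * n * exp D * ∏ j, exp (-(ξ j : ℝ)) := by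
      rw [← exp_sum, sum_neg_distrib, sub_eq_add_neg, exp_add]
      ring

theorem not_summable_Ctilde_of_nonneg (hα : 0 ≤ α) (i : Fin n) : ¬ Summable (Ctilde G α β) := by
  refine not_summable_of_tendsto_apply (F := fun m => Pi.single i m) i
    (by simp only [Pi.single_eq_same]; exact tendsto_id) one_pos fun m => ?_
  have hW : W G α β (Pi.single i m) = α / 2 * (m * (m - 1)) := by simp [W, Pi.single_apply]
  refine (one_le_exp ?_).trans (exp_le_Ctilde G _ i)
  rw [hW, Pi.single_eq_same]
  rcases m.eq_zero_or_pos with rfl | hm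
  · simp
  · have : (1 : ℝ) ≤ m := by exact_mod_cast hm
    have : 0 ≤ (m : ℝ) * (m - 1) := by nlinarith
    positivity

theorem not_summable_Ctilde_of_le (hα : α < 0) (hαβ : 0 ≤ α + β * lam)
    (hlam : IsGreatest {μ : ℝ | ∃ v : Fin n → ℝ, v ≠ 0 ∧ G.adjMatrix ℝ *ᵥ v = μ • v} lam) :
    ¬ Summable (Ctilde G α β) := by
  have hlam0 : lam ≠ 0 := by rintro rfl; linarith
  obtain ⟨w, hw0, hw_nonneg, hw⟩ := exists_nonneg_eigenvector_of_isGreatest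
    (G.isHermitian_adjMatrix ℝ) G.adjMatrix_nonneg_s4 hlam
  have := G.nontrivial_of_adjMatrix_mulVec_ne_zero (v := w)
    (by rw [hw]; exact smul_ne_zero hlam0 hw0)
  obtain ⟨i, hi⟩ : ∃ i, 0 < w i := by
    obtain ⟨i, hi⟩ := Function.ne_iff.mp hw0
    exact ⟨i, (hw_nonneg i).lt_of_ne' hi⟩
  obtain ⟨K, hK⟩ : BddBelow ((fun δ => -β * (δ ⬝ᵥ (lam • 1 - G.adjMatrix ℝ) *ᵥ δ)) ''
      Set.Icc 0 1) :=
    isCompact_Icc.bddBelow_image (by fun_prop : Continuous _).continuousOn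
  refine not_summable_of_tendsto_apply (F := fun m j => ⌈m * w j⌉₊) i
    (tendsto_nat_ceil_atTop.comp (tendsto_natCast_atTop_atTop.atTop_mul_const hi))
    (exp_pos (K / 2)) fun m => ?_
  set x : Fin n → ℝ := fun j => (⌈m * w j⌉₊ : ℝ)
  have hδ : x - (m : ℝ) • w ∈ Set.Icc 0 1 := ⟨fun j => sub_nonneg.mpr (Nat.le_ceil _),
    fun j => by
      simp only [Pi.sub_apply, Pi.smul_apply, smul_eq_mul, Pi.one_apply, x]
      linarith [Nat.ceil_lt_add_one (mul_nonneg m.cast_nonneg (hw_nonneg j))]⟩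
  have hQ : K ≤ α * (x ⬝ᵥ x) + β * (x ⬝ᵥ G.adjMatrix ℝ *ᵥ x) := by
    have hx := dotProduct_mulVec_smul_add_of_mulVec_eq G.transpose_adjMatrix hw m (x - (m : ℝ) • w)
    rw [add_sub_cancel] at hx
    have hxx : 0 ≤ x ⬝ᵥ x := sum_nonneg fun j _ => mul_self_nonneg (x j)
    have hKδ : K ≤ -β * ((x - (m : ℝ) • w) ⬝ᵥ (lam • 1 - G.adjMatrix ℝ) *ᵥ (x - (m : ℝ) • w)) :=
      hK ⟨_, hδ, rfl⟩
    rw [hx]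
    nlinarith [mul_nonneg hαβ hxx]
  obtain ⟨i₀, hi₀⟩ := exists_two_mul_le_sum x fun j => Nat.cast_nonneg _
  refine (exp_le_exp.mpr ?_).trans (exp_le_Ctilde G _ i₀)
  rw [W_eq]
  nlinarith [mul_nonneg (neg_nonneg.mpr hα.le) (sub_nonneg.mpr hi₀)]

end ModifiedModel

theorem stmt4_general {n : ℕ} (G : SimpleGraph (Fin n)) [DecidableRel G.Adj]
    (α β : ℝ) (lam1 : ℝ)
    (hlam : IsGreatest
      {μ : ℝ | ∃ v : Fin n → ℝ, v ≠ 0 ∧ (G.adjMatrix ℝ).mulVec v = μ • v} lam1) :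
    Summable (fun ξ : Fin n → ℕ => Ctilde G α β ξ) ↔ α < 0 ∧ α + β * lam1 < 0 := by
  refine ⟨fun hs => ?_, fun h => summable_Ctilde G h.1 h.2 hlam⟩
  obtain ⟨v, hv, -⟩ := hlam.1
  obtain ⟨i, -⟩ := Function.ne_iff.mp hv
  have hα : α < 0 := not_le.mp fun hα => not_summable_Ctilde_of_nonneg G hα i hs
  exact ⟨hα, not_le.mp fun hαβ => not_summable_Ctilde_of_le G hα hαβ hlam hs⟩

/-- `Σ_{ξ ∈ ℤ₊ⁿ} C̃_ξ < ∞` iff `α < 0` and `α + β λ₁(G) < 0`. -/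
theorem stmt4 {n : ℕ} (hn : 0 < n) (G : SimpleGraph (Fin n)) [DecidableRel G.Adj]
    (α β : ℝ) (lam1 : ℝ)
    (hlam : IsGreatest
      {μ : ℝ | ∃ v : Fin n → ℝ, v ≠ 0 ∧ (G.adjMatrix ℝ).mulVec v = μ • v} lam1) :
    Summable (fun ξ : Fin n → ℕ => Ctilde G α β ξ) ↔ α < 0 ∧ α + β * lam1 < 0 :=
  stmt4_general G α β lam1 hlam
end

section
/- Define φ, ψ : ℝ → ℝ by φ(u) := e^u + 1 and ψ(u) := u(e^u − 1), and Φ, Ψ : ℝⁿ → ℝ by Φ(u) := Σ_{i=1}^n φ(uᵢ) and Ψ(u) := Σ_{i=1}^n ψ(uᵢ). Then Ψ(u)/Φ(u) → +∞ as ‖u‖ → ∞; that is, for every B > 0 there exists M such that Ψ(u)/Φ(u) > B whenever ‖u‖ > M. -/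
/-!
Fix `B` and put `g(t) = t(eᵗ - 1) - B(eᵗ + 1)`, so that `Ψ(u) - B Φ(u) = Σᵢ g(uᵢ)`.
The elementary bound `(|t| - 2)(eᵗ + 1) ≤ t(eᵗ - 1)` shows that `g(t) → +∞` as `|t| → ∞`;
being continuous, `g` is also bounded below. Hence when `‖u‖ → ∞`, some coordinate is
large and drives `Σᵢ g(uᵢ)` to `+∞`, while the other coordinates contribute a bounded-below
amount. So `Ψ(u) - B Φ(u) > 0` for large `‖u‖`, and `Φ > 0` turns this into `Ψ / Φ > B`.
-/

open Finset Real Filter Topology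

theorem abs_sub_two_mul_exp_add_one_le (t : ℝ) :
    (|t| - 2) * (exp t + 1) ≤ t * (exp t - 1) := by
  rcases le_or_gt 0 t with ht | ht
  · rw [abs_of_nonneg ht]
    linarith [add_one_le_exp t]
  · have hneg : exp t * (1 - t) ≤ 1 :=
      calc exp t * (1 - t) ≤ exp t * exp (-t) := by gcongr; linarith [add_one_le_exp (-t)]
        _ = 1 := by rw [← exp_add, add_neg_cancel, exp_zero]
    rw [abs_of_neg ht]
    linarith [exp_pos t]

theorem tendsto_mul_exp_sub_one_sub_mul_exp_add_one (B : ℝ) :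
    Tendsto (fun t => t * (exp t - 1) - B * (exp t + 1)) (cocompact ℝ) atTop := by
  have habs : Tendsto (fun t : ℝ => |t| - (2 + B)) (cocompact ℝ) atTop := by
    simpa only [norm_eq_abs, sub_eq_add_neg] using
      tendsto_atTop_add_const_right _ (-(2 + B)) (tendsto_norm_cocompact_atTop (E := ℝ))
  refine tendsto_atTop_mono' _ ?_ habs
  filter_upwards [habs.eventually_ge_atTop 0] with t ht
  calc |t| - (2 + B) ≤ (|t| - (2 + B)) * (exp t + 1) :=
        le_mul_of_one_le_right ht (by linarith [exp_pos t])
    _ ≤ t * (exp t - 1) - B * (exp t + 1) := by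
        linarith [abs_sub_two_mul_exp_add_one_le t]

theorem tendsto_sum_comp_cocompact {ι X : Type*} [Fintype ι] [TopologicalSpace X]
    {f : X → ℝ} (hf_bdd : BddBelow (Set.range f)) (hf : Tendsto f (cocompact X) atTop) :
    Tendsto (fun x : ι → X => ∑ i, f (x i)) (cocompact (ι → X)) atTop := by
  classical
  obtain ⟨C, hC⟩ := hf_bdd
  rw [← coprodᵢ_cocompact, Filter.coprodᵢ, tendsto_iSup]
  intro i
  have hrest : ∀ x : ι → X, (univ.erase i).card • C ≤ ∑ j ∈ univ.erase i, f (x j) :=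
    fun x => card_nsmul_le_sum _ _ _ fun j _ => hC ⟨x j, rfl⟩
  simpa only [Function.comp_apply, Function.eval, sum_erase_add _ _ (mem_univ i)] using
    tendsto_atTop_add_left_of_le _ _ hrest (hf.comp (tendsto_comap (f := Function.eval i)))

theorem EuclideanSpace.tendsto_sum_comp_cobounded {ι : Type*} [Fintype ι] {f : ℝ → ℝ}
    (hf_bdd : BddBelow (Set.range f)) (hf : Tendsto f (cocompact ℝ) atTop) :
    Tendsto (fun u : EuclideanSpace ℝ ι => ∑ i, f (u i)) (Bornology.cobounded _) atTop := by
  rw [Metric.cobounded_eq_cocompact, ← (PiLp.homeomorph 2 fun _ : ι => ℝ).comap_cocompact]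
  exact (tendsto_sum_comp_cocompact hf_bdd hf).comp tendsto_comap

theorem stmt5_general {n : ℕ} (hn : 1 ≤ n) (B : ℝ) :
    ∃ M : ℝ, ∀ u : EuclideanSpace ℝ (Fin n), M < ‖u‖ →
      B < (∑ i, u i * (Real.exp (u i) - 1)) / (∑ i, (Real.exp (u i) + 1)) := by
  have : Nonempty (Fin n) := ⟨⟨0, hn⟩⟩
  have hg := tendsto_mul_exp_sub_one_sub_mul_exp_add_one B
  obtain ⟨t₀, ht₀⟩ := (by fun_prop : Continuous fun t => t * (exp t - 1) - B * (exp t + 1)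
    ).exists_forall_le hg
  have hpos := (EuclideanSpace.tendsto_sum_comp_cobounded (ι := Fin n)
    ⟨_, Set.forall_mem_range.2 ht₀⟩ hg).eventually_gt_atTop 0
  rw [← comap_norm_atTop, (atTop_basis.comap _).eventually_iff] at hpos
  obtain ⟨M, -, hM⟩ := hpos
  refine ⟨M, fun u hu => ?_⟩
  have hΦ : 0 < ∑ i, (exp (u i) + 1) := sum_pos (fun i _ => by positivity) univ_nonempty
  have hΨ := hM (Set.mem_preimage.2 (Set.mem_Ici.2 hu.le))
  rw [sum_sub_distrib, ← mul_sum] at hΨ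
  rw [lt_div_iff₀ hΦ]
  linarith

/-- With `φ(u) = e^u + 1`, `ψ(u) = u(e^u − 1)`, `Φ(u) = Σᵢ φ(uᵢ)`, `Ψ(u) = Σᵢ ψ(uᵢ)`,
the ratio `Ψ(u)/Φ(u) → +∞` as `‖u‖ → ∞`: for every `B > 0` there is `M` with
`Ψ(u)/Φ(u) > B` whenever `‖u‖ > M`. -/
theorem stmt5 {n : ℕ} (hn : 1 ≤ n) (B : ℝ) (hB : 0 < B) :
    ∃ M : ℝ, ∀ u : EuclideanSpace ℝ (Fin n), M < ‖u‖ →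
      B < (∑ i, u i * (Real.exp (u i) - 1)) / (∑ i, (Real.exp (u i) + 1)) :=
  stmt5_general hn B
end

section
/- Suppose α < 0, β ≥ 0 and α + β λ₁(G) < 0. Then there exist constants c > 0 and C > 0 such that for every ξ ∈ ℤ₊ⁿ, e^{W(ξ)} ≤ C e^{−c S(ξ)²}. In fact one may show W(ξ) ≤ ((α + β λ₁(G))/(2n)) S(ξ)² + (|α|/2) S(ξ) for all ξ ∈ ℤ₊ⁿ. -/
open Finset Real
open Matrix

/-- `c • 1 - A` has nonnegative eigenvalues, hence is positive semidefinite. -/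
theorem Matrix.IsHermitian.dotProduct_mulVec_le {ι : Type*} [Fintype ι] [DecidableEq ι]
    {A : Matrix ι ι ℝ} (hA : A.IsHermitian) {c : ℝ}
    (hc : ∀ μ : ℝ, (∃ v : ι → ℝ, v ≠ 0 ∧ A *ᵥ v = μ • v) → μ ≤ c) (x : ι → ℝ) :
    x ⬝ᵥ A *ᵥ x ≤ c * (x ⬝ᵥ x) := by
  have hB : (c • (1 : Matrix ι ι ℝ) - A).IsHermitian :=
    (isHermitian_one.smul (IsSelfAdjoint.all c)).sub hA
  have hpsd : (c • (1 : Matrix ι ι ℝ) - A).PosSemidef := by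
    rw [hB.posSemidef_iff_eigenvalues_nonneg]
    intro i
    set v : ι → ℝ := ⇑(hB.eigenvectorBasis i)
    have hv : v ≠ 0 := fun h =>
      hB.eigenvectorBasis.orthonormal.ne_zero i (by ext k; exact congrFun h k)
    have hAv : A *ᵥ v = (c - hB.eigenvalues i) • v := by
      have := hB.mulVec_eigenvectorBasis i
      rw [sub_mulVec, smul_mulVec, one_mulVec] at this
      rw [sub_smul, ← this, sub_sub_cancel]
    simpa using hc _ ⟨v, hv, hAv⟩
  have := hpsd.dotProduct_mulVec_nonneg x
  rw [star_trivial, sub_mulVec, smul_mulVec, one_mulVec, dotProduct_sub, dotProduct_smul,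
    smul_eq_mul] at this
  linarith

theorem W_eq_dotProduct {n : ℕ} (G : SimpleGraph (Fin n)) [DecidableRel G.Adj] (α β : ℝ)
    (ξ : Fin n → ℕ) :
    W G α β ξ = α / 2 * ((Nat.cast ∘ ξ) ⬝ᵥ (Nat.cast ∘ ξ) - ∑ i, (ξ i : ℝ))
      + β / 2 * ((Nat.cast ∘ ξ) ⬝ᵥ G.adjMatrix ℝ *ᵥ (Nat.cast ∘ ξ)) := by
  simp only [W, dotProduct, mulVec, Function.comp, mul_sub, mul_one, sum_sub_distrib, mul_sum]
  congr 1
  exact sum_congr rfl fun i _ => sum_congr rfl fun j _ => by ring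

theorem W_le_of_forall_eigenvalue_le {n : ℕ} (hn : 0 < n) (G : SimpleGraph (Fin n))
    [DecidableRel G.Adj] {α β lam1 : ℝ} (hβ : 0 ≤ β)
    (hlam : ∀ μ : ℝ, (∃ v : Fin n → ℝ, v ≠ 0 ∧ G.adjMatrix ℝ *ᵥ v = μ • v) → μ ≤ lam1)
    (hcrit : α + β * lam1 ≤ 0) (ξ : Fin n → ℕ) :
    W G α β ξ ≤ (α + β * lam1) / (2 * n) * (∑ i, (ξ i : ℝ)) ^ 2
      + |α| / 2 * ∑ i, (ξ i : ℝ) := by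
  set x : Fin n → ℝ := Nat.cast ∘ ξ
  set S := ∑ i, (ξ i : ℝ)
  have hS : 0 ≤ S := sum_nonneg fun i _ => Nat.cast_nonneg _
  have hquad : x ⬝ᵥ G.adjMatrix ℝ *ᵥ x ≤ lam1 * (x ⬝ᵥ x) :=
    (G.isHermitian_adjMatrix ℝ).dotProduct_mulVec_le hlam x
  have hCS : S ^ 2 ≤ n * (x ⬝ᵥ x) := by
    simpa [dotProduct, sq, x, S] using sq_sum_le_card_mul_sum_sq (s := univ) (f := x)
  have hn' : (0 : ℝ) < n := Nat.cast_pos.mpr hn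
  have hQ : (α + β * lam1) / 2 * (x ⬝ᵥ x) ≤ (α + β * lam1) / (2 * n) * S ^ 2 := by
    rw [div_mul_eq_mul_div, div_mul_eq_mul_div, div_le_div_iff₀ (by norm_num) (by positivity)]
    nlinarith
  rw [W_eq_dotProduct]
  nlinarith [mul_le_mul_of_nonneg_left hquad hβ, neg_le_abs α]

theorem exists_exp_le_mul_exp_neg_sq {ι : Type*} {f S : ι → ℝ} {a b : ℝ} (ha : a < 0)
    (hf : ∀ i, f i ≤ a * S i ^ 2 + b * S i) :
    ∃ c : ℝ, 0 < c ∧ ∃ C : ℝ, 0 < C ∧ ∀ i, exp (f i) ≤ C * exp (-c * S i ^ 2) := by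
  refine ⟨-a / 2, by linarith, exp (b ^ 2 / (-2 * a)), exp_pos _, fun i => ?_⟩
  rw [← exp_add, exp_le_exp]
  have : a / 2 * S i ^ 2 + b * S i ≤ b ^ 2 / (-2 * a) := by
    rw [le_div_iff₀ (by linarith)]
    nlinarith [sq_nonneg (a * S i + b)]
  linarith [hf i]

theorem stmt8_general {n : ℕ} (hn : 0 < n) (G : SimpleGraph (Fin n)) [DecidableRel G.Adj]
    (α β : ℝ) (hβ : 0 ≤ β) (lam1 : ℝ)
    (hlam : IsGreatest
      {μ : ℝ | ∃ v : Fin n → ℝ, v ≠ 0 ∧ (G.adjMatrix ℝ).mulVec v = μ • v} lam1)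
    (hcrit : α + β * lam1 < 0) :
    (∃ c : ℝ, 0 < c ∧ ∃ C : ℝ, 0 < C ∧ ∀ ξ : Fin n → ℕ,
        Real.exp (W G α β ξ) ≤ C * Real.exp (-c * (∑ i, (ξ i : ℝ)) ^ 2))
    ∧ ∀ ξ : Fin n → ℕ,
        W G α β ξ ≤ (α + β * lam1) / (2 * n) * (∑ i, (ξ i : ℝ)) ^ 2
          + |α| / 2 * ∑ i, (ξ i : ℝ) := by
  have hW := W_le_of_forall_eigenvalue_le hn G hβ (fun μ hμ => hlam.2 hμ) hcrit.le
  have ha : (α + β * lam1) / (2 * n) < 0 :=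
    div_neg_of_neg_of_pos hcrit (by positivity)
  exact ⟨exists_exp_le_mul_exp_neg_sq ha hW, hW⟩

/-- If `α < 0`, `β ≥ 0` and `α + β λ₁(G) < 0`, then there are `c, C > 0` with
`e^{W(ξ)} ≤ C e^{−c S(ξ)²}` for all `ξ`; in fact
`W(ξ) ≤ ((α + β λ₁(G))/(2n)) S(ξ)² + (|α|/2) S(ξ)`. -/
theorem stmt8 {n : ℕ} (hn : 0 < n) (G : SimpleGraph (Fin n)) [DecidableRel G.Adj]
    (α β : ℝ) (hα : α < 0) (hβ : 0 ≤ β) (lam1 : ℝ)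
    (hlam : IsGreatest
      {μ : ℝ | ∃ v : Fin n → ℝ, v ≠ 0 ∧ (G.adjMatrix ℝ).mulVec v = μ • v} lam1)
    (hcrit : α + β * lam1 < 0) :
    (∃ c : ℝ, 0 < c ∧ ∃ C : ℝ, 0 < C ∧ ∀ ξ : Fin n → ℕ,
        Real.exp (W G α β ξ) ≤ C * Real.exp (-c * (∑ i, (ξ i : ℝ)) ^ 2))
    ∧ ∀ ξ : Fin n → ℕ,
        W G α β ξ ≤ (α + β * lam1) / (2 * n) * (∑ i, (ξ i : ℝ)) ^ 2
          + |α| / 2 * ∑ i, (ξ i : ℝ) :=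
  stmt8_general hn G α β hβ lam1 hlam hcrit
end

section
/- Suppose the independence number of G satisfies κ(G) ≤ 2, and let b > 0. Then there exists a constant C = C(n, b) < ∞ such that for every integer L ≥ 1, Σ_{ξ ∈ ℤ₊ⁿ : S(ξ) = L} exp(−b Σ_{{i,j} : i ∼ j} ξᵢ ξⱼ) ≤ C · L. (This is the total conductance between levels L−1 and L in the network for α = 0, β = −b.) -/
/-!
Among any three coordinates of `ξ` two sit on adjacent vertices, since `κ(G) ≤ 2`. Let `p`, `q`
carry the two largest coordinates of `ξ`: for every other vertex `k` with `ξ k ≥ 1`, the vertices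
`p, q, k` span an edge `u ∼ v` and `ξ k ≤ ξ u ξ v`, so every coordinate off `{p, q}` is at most the
energy `E(ξ)`. Hence `exp (-b E(ξ)) ≤ r ^ m` with `r = exp (-b / n)` and `m` the mass of `ξ` off
`{p, q}`. For fixed `p, q`, a vector on the level `S(ξ) = L` is determined by `ξ p ≤ L` and its
values off `{p, q}`, so the level sum of `r ^ m` is at most `(L + 1) (1 - r)⁻ⁿ`; a union bound over
the `n²` choices of `(p, q)` gives the linear bound in `L`.
-/

open Finset Real
open scoped ENNReal

theorem ENNReal.tsum_fin_pi_prod {α : Type*} :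
    ∀ {m : ℕ} (f : Fin m → α → ℝ≥0∞), ∑' x : Fin m → α, ∏ i, f i (x i) = ∏ i, ∑' a, f i a
  | 0, f => by simp
  | m + 1, f => by
    rw [← (Fin.consEquiv fun _ => α).tsum_eq, ENNReal.tsum_prod', Fin.prod_univ_succ,
      ← ENNReal.tsum_fin_pi_prod, ← ENNReal.tsum_mul_right]
    simp [Fin.consEquiv, Fin.prod_univ_succ, ENNReal.tsum_mul_left]

theorem ENNReal.tsum_pow_sum {ι : Type*} [Fintype ι] (r : ℝ≥0∞) :
    ∑' η : ι → ℕ, r ^ (∑ i, η i) = (1 - r)⁻¹ ^ Fintype.card ι := by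
  let e := (Fintype.equivFin ι).arrowCongr (Equiv.refl ℕ)
  have hprod : ∀ η : Fin (Fintype.card ι) → ℕ, ∏ i, r ^ (e.symm η i) = ∏ j, r ^ η j := fun η =>
    Fintype.prod_equiv (Fintype.equivFin ι) _ _ fun i => by simp [e]
  simp_rw [← prod_pow_eq_pow_sum]
  rw [← e.symm.tsum_eq]
  simp_rw [hprod, ENNReal.tsum_fin_pi_prod, ENNReal.tsum_geometric, prod_const, card_univ,
    Fintype.card_fin]

section LevelSet

variable {ι : Type*} [Fintype ι] [DecidableEq ι]

def sumOff (ξ : ι → ℕ) (p q : ι) : ℕ := ∑ i, Function.update (Function.update ξ p 0) q 0 i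

theorem Function.eq_of_sum_eq_of_forall_ne {ξ ξ' : ι → ℕ} (q : ι) (hsum : ∑ i, ξ i = ∑ i, ξ' i)
    (h : ∀ k, k ≠ q → ξ k = ξ' k) : ξ = ξ' := by
  funext k
  by_cases hk : k = q
  · subst hk
    have hrest : ∑ i ∈ univ.erase k, ξ i = ∑ i ∈ univ.erase k, ξ' i :=
      sum_congr rfl fun i hi => h i (ne_of_mem_erase hi)
    rw [← add_sum_erase _ _ (mem_univ k), ← add_sum_erase _ ξ' (mem_univ k), hrest] at hsum
    omega
  · exact h k hk

theorem tsum_ite_pow_sumOff_le (r : ℝ≥0∞) (p q : ι) (L : ℕ) :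
    ∑' ξ : ι → ℕ, (if ∑ i, ξ i = L then r ^ sumOff ξ p q else 0) ≤
      (L + 1) * (1 - r)⁻¹ ^ Fintype.card ι := by
  -- on the level set, `ξ` is recovered from `ξ p` and its values off `{p, q}`
  let φ : {ξ : ι → ℕ // ∑ i, ξ i = L} → Fin (L + 1) × (ι → ℕ) := fun ξ =>
    (⟨ξ.1 p, Nat.lt_succ_of_le ((single_le_sum (fun _ _ => Nat.zero_le _) (mem_univ p)).trans_eq
      ξ.2)⟩, Function.update (Function.update ξ.1 p 0) q 0)
  have hφ : φ.Injective := by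
    rintro ⟨ξ, hξ⟩ ⟨ξ', hξ'⟩ h
    simp only [φ, Prod.mk.injEq, Fin.mk.injEq] at h
    refine Subtype.ext (Function.eq_of_sum_eq_of_forall_ne q (hξ.trans hξ'.symm) fun k hkq => ?_)
    by_cases hkp : k = p
    · exact hkp ▸ h.1
    · simpa [hkp, hkq] using congrFun h.2 k
  calc ∑' ξ : ι → ℕ, (if ∑ i, ξ i = L then r ^ sumOff ξ p q else 0)
      = ∑' ξ : {ξ : ι → ℕ // ∑ i, ξ i = L}, r ^ sumOff ξ.1 p q := by
        have h := tsum_subtype {ξ : ι → ℕ | ∑ i, ξ i = L} fun ξ => r ^ sumOff ξ p q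
        simp only [Set.indicator_apply, Set.mem_ofPred_eq] at h
        exact h.symm
    _ ≤ ∑' x : Fin (L + 1) × (ι → ℕ), r ^ ∑ i, x.2 i :=
        ENNReal.tsum_comp_le_tsum_of_injective hφ fun x => r ^ ∑ i, x.2 i
    _ = (L + 1) * (1 - r)⁻¹ ^ Fintype.card ι := by
        simp [ENNReal.tsum_prod', ENNReal.tsum_pow_sum]

end LevelSet

namespace SimpleGraph

variable {V : Type*} {G : SimpleGraph V} [DecidableRel G.Adj]

theorem exists_adj_of_card_eq_three
    (hκ : ∀ s : Finset V, (∀ i ∈ s, ∀ j ∈ s, i ≠ j → ¬G.Adj i j) → s.card ≤ 2)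
    {s : Finset V} (hs : s.card = 3) : ∃ u ∈ s, ∃ v ∈ s, G.Adj u v := by
  by_contra! h
  have := hκ s fun i hi j hj _ => h i hi j hj
  omega

theorem adjMatrix_mul_mul_nonneg {x : V → ℝ} (hx : ∀ i, 0 ≤ x i) (i j : V) :
    0 ≤ G.adjMatrix ℝ i j * x i * x j := by
  have := hx i
  have := hx j
  rw [adjMatrix_apply]
  split_ifs <;> positivity

variable [Fintype V]

/-- `∑_{i ∼ j} x i * x j`, each edge counted once. -/
noncomputable def edgeEnergy (G : SimpleGraph V) [DecidableRel G.Adj] (x : V → ℝ) : ℝ :=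
  1 / 2 * ∑ i, ∑ j, G.adjMatrix ℝ i j * x i * x j

theorem edgeEnergy_nonneg {x : V → ℝ} (hx : ∀ i, 0 ≤ x i) : 0 ≤ G.edgeEnergy x :=
  mul_nonneg (by norm_num) <| sum_nonneg fun i _ => sum_nonneg fun j _ =>
    adjMatrix_mul_mul_nonneg hx i j

theorem mul_le_edgeEnergy {x : V → ℝ} (hx : ∀ i, 0 ≤ x i) {u v : V} (huv : G.Adj u v) :
    x u * x v ≤ G.edgeEnergy x := by
  classical
  have hpair := sum_le_sum_of_subset_of_nonneg (subset_univ {(u, v), (v, u)})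
    fun p _ _ => adjMatrix_mul_mul_nonneg (G := G) hx p.1 p.2
  rw [sum_pair (by simp [G.ne_of_adj huv]), ← univ_product_univ, sum_product] at hpair
  unfold edgeEnergy
  simp only [adjMatrix_apply, if_pos huv, if_pos huv.symm] at hpair ⊢
  linarith

theorem exists_forall_le_edgeEnergy [Nonempty V]
    (hκ : ∀ s : Finset V, (∀ i ∈ s, ∀ j ∈ s, i ≠ j → ¬G.Adj i j) → s.card ≤ 2) (ξ : V → ℕ) :
    ∃ p q, ∀ k, k ≠ p → k ≠ q → (ξ k : ℝ) ≤ G.edgeEnergy (fun i => ξ i) := by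
  classical
  obtain ⟨p, hp⟩ := Finite.exists_max ξ
  obtain ⟨q, hq⟩ := Finite.exists_max (Function.update ξ p 0)
  refine ⟨p, q, fun k hkp hkq => ?_⟩
  have hx : ∀ i, (0 : ℝ) ≤ ξ i := fun i => Nat.cast_nonneg _
  rcases Nat.eq_zero_or_pos (ξ k) with hk | hk
  · rw [hk, Nat.cast_zero]
    exact edgeEnergy_nonneg hx
  have hqk := hq k
  rw [Function.update_of_ne hkp] at hqk
  have hqp : q ≠ p := by
    rintro rfl
    rw [Function.update_self] at hqk
    omega
  rw [Function.update_of_ne hqp] at hqk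
  have hge : ∀ i ∈ ({p, q, k} : Finset V), ξ k ≤ ξ i := by
    simp only [mem_insert, mem_singleton]
    rintro i (rfl | rfl | rfl)
    exacts [hqk.trans (hp _), hqk, le_rfl]
  obtain ⟨u, hu, v, hv, huv⟩ := exists_adj_of_card_eq_three hκ
    (card_eq_three.mpr ⟨p, q, k, hqp.symm, Ne.symm hkp, Ne.symm hkq, rfl⟩)
  have hkuv : ξ k ≤ ξ u * ξ v :=
    (hge u hu).trans (Nat.le_mul_of_pos_right _ (hk.trans_le (hge v hv)))
  calc (ξ k : ℝ) ≤ ξ u * ξ v := by exact_mod_cast hkuv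
    _ ≤ G.edgeEnergy (fun i => ξ i) := mul_le_edgeEnergy hx huv

theorem exists_ofReal_exp_le_pow_sumOff [Nonempty V] [DecidableEq V]
    (hκ : ∀ s : Finset V, (∀ i ∈ s, ∀ j ∈ s, i ≠ j → ¬G.Adj i j) → s.card ≤ 2)
    {b : ℝ} (hb : 0 ≤ b) (ξ : V → ℕ) :
    ∃ p q, ENNReal.ofReal (exp (-b * G.edgeEnergy fun i => ξ i)) ≤
      ENNReal.ofReal (exp (-b / Fintype.card V)) ^ sumOff ξ p q := by
  obtain ⟨p, q, hpq⟩ := exists_forall_le_edgeEnergy hκ ξ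
  refine ⟨p, q, ?_⟩
  set E := G.edgeEnergy fun i => ξ i
  set η := Function.update (Function.update ξ p 0) q 0
  have hη : ∀ k, (η k : ℝ) ≤ E := by
    intro k
    have hE : 0 ≤ E := edgeEnergy_nonneg fun i => Nat.cast_nonneg (ξ i)
    simp only [η, Function.update_apply]
    split_ifs with hkq hkp
    · simpa using hE
    · simpa using hE
    · exact hpq k hkp hkq
  have hc : (0 : ℝ) < Fintype.card V := by exact_mod_cast Fintype.card_pos
  have hmass : ((sumOff ξ p q : ℕ) : ℝ) / Fintype.card V ≤ E := by
    rw [div_le_iff₀' hc, sumOff]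
    push_cast
    simpa using sum_le_sum fun i (_ : i ∈ univ) => hη i
  rw [← ENNReal.ofReal_pow (exp_nonneg _), ← Real.exp_nat_mul]
  refine ENNReal.ofReal_le_ofReal (exp_le_exp.mpr ?_)
  calc -b * E ≤ -b * ((sumOff ξ p q : ℝ) / Fintype.card V) :=
        mul_le_mul_of_nonpos_left hmass (neg_nonpos.mpr hb)
    _ = _ := by ring

theorem ite_ofReal_exp_le_sum_pow_sumOff [DecidableEq V]
    (hκ : ∀ s : Finset V, (∀ i ∈ s, ∀ j ∈ s, i ≠ j → ¬G.Adj i j) → s.card ≤ 2)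
    {b : ℝ} (hb : 0 ≤ b) {L : ℕ} (hL : L ≠ 0) (ξ : V → ℕ) :
    (if ∑ i, ξ i = L then ENNReal.ofReal (exp (-b * G.edgeEnergy fun i => ξ i)) else 0) ≤
      ∑ pq : V × V, if ∑ i, ξ i = L then
        ENNReal.ofReal (exp (-b / Fintype.card V)) ^ sumOff ξ pq.1 pq.2 else 0 := by
  split_ifs with hξ
  · obtain ⟨i, -, -⟩ := exists_ne_zero_of_sum_ne_zero (s := univ) (f := ξ) (hξ ▸ hL)
    have : Nonempty V := ⟨i⟩
    obtain ⟨p, q, h⟩ := exists_ofReal_exp_le_pow_sumOff hκ hb ξ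
    exact h.trans (single_le_sum (f := fun pq : V × V =>
      ENNReal.ofReal (exp (-b / Fintype.card V)) ^ sumOff ξ pq.1 pq.2)
      (fun _ _ => zero_le) (mem_univ (p, q)))
  · exact zero_le

end SimpleGraph

/-- If the independence number of `G` is at most `2` and `b > 0`, then there is a constant
`C = C(n,b) < ∞` such that for every `L ≥ 1`,
`Σ_{ξ ∈ ℤ₊ⁿ : S(ξ) = L} exp(−b Σ_{edges i∼j} ξᵢξⱼ) ≤ C·L`.
The edge sum is written as half the double sum over the adjacency matrix. -/
theorem stmt9 {n : ℕ} (G : SimpleGraph (Fin n)) [DecidableRel G.Adj]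
    (hκ : ∀ s : Finset (Fin n), (∀ i ∈ s, ∀ j ∈ s, i ≠ j → ¬G.Adj i j) → s.card ≤ 2)
    (b : ℝ) (hb : 0 < b) :
    ∃ C : ℝ, ∀ L : ℕ, 1 ≤ L →
      (∑' ξ : Fin n → ℕ,
          if (∑ i, ξ i) = L then
            ENNReal.ofReal (Real.exp
              (-b * (1 / 2 * ∑ i, ∑ j, G.adjMatrix ℝ i j * (ξ i : ℝ) * (ξ j : ℝ))))
          else 0)
        ≤ ENNReal.ofReal (C * L) := by
  obtain rfl | hn := Nat.eq_zero_or_pos n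
  · exact ⟨0, fun L hL => by simp; omega⟩
  set r := ENNReal.ofReal (exp (-b / n))
  have hr : r < 1 := ENNReal.ofReal_lt_one.mpr <| exp_lt_one_iff.mpr <|
    div_neg_of_neg_of_pos (neg_lt_zero.mpr hb) (Nat.cast_pos.mpr hn)
  have hK : (1 - r)⁻¹ ^ n ≠ ⊤ := ENNReal.pow_ne_top (ENNReal.inv_ne_top.mpr (tsub_pos_of_lt hr).ne')
  refine ⟨(2 * n ^ 2 * (1 - r)⁻¹ ^ n).toReal, fun L hL => ?_⟩
  have hpt := G.ite_ofReal_exp_le_sum_pow_sumOff hκ hb.le (Nat.one_le_iff_ne_zero.mp hL)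
  simp only [Fintype.card_fin] at hpt
  calc _ ≤ _ := ENNReal.tsum_le_tsum hpt
    _ = ∑ pq : Fin n × Fin n, ∑' ξ : Fin n → ℕ,
          if ∑ i, ξ i = L then r ^ sumOff ξ pq.1 pq.2 else 0 :=
        Summable.tsum_finsetSum fun _ _ => ENNReal.summable
    _ ≤ ∑ _pq : Fin n × Fin n, (L + 1) * (1 - r)⁻¹ ^ n := by
        gcongr with pq
        simpa using tsum_ite_pow_sumOff_le r pq.1 pq.2 L
    _ = n ^ 2 * (L + 1) * (1 - r)⁻¹ ^ n := by simp [sq, mul_assoc]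
    _ ≤ n ^ 2 * (2 * L) * (1 - r)⁻¹ ^ n := by
        gcongr
        exact_mod_cast (by omega : L + 1 ≤ 2 * L)
    _ = _ := by
        rw [ENNReal.ofReal_mul ENNReal.toReal_nonneg, ENNReal.ofReal_toReal (by finiteness),
          ENNReal.ofReal_natCast]
        ring
end

section
/- Suppose α = 0, β > 0 and G has at least one edge (so λ₁(G) > 0). Then there exist a sequence (y_k)_{k≥0} in ℤ₊ⁿ with y₀ = 0 and, for every k, y_{k+1} = y_k + e_{i(k)} for some coordinate i(k), a constant c₁ > 0 and an integer K such that W(y_k) ≥ c₁ k² for all k ≥ K. Consequently Σ_{k=0}^∞ e^{−W(y_k)} < ∞. -/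
/-! Pick an edge `a ∼ b` and walk alternately in the `a`- and `b`-directions. After `k` steps
the two coordinates are `⌈k/2⌉` and `⌊k/2⌋`, so the single edge term `β ξ_a ξ_b` of `W` is
already at least `β k² / 8`; the Gaussian decay of `e^{-W}` along the walk then dominates a
geometric series. -/

open Finset Real

theorem SimpleGraph.two_mul_le_sum_adjMatrix_mul {V : Type*} [Fintype V] [DecidableEq V]
    {G : SimpleGraph V} [DecidableRel G.Adj] {a b : V} (hab : G.Adj a b) {ξ : V → ℝ}
    (hξ : 0 ≤ ξ) : 2 * (ξ a * ξ b) ≤ ∑ i, ∑ j, G.adjMatrix ℝ i j * ξ i * ξ j := by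
  have hterm : ∀ p : V × V, 0 ≤ G.adjMatrix ℝ p.1 p.2 * ξ p.1 * ξ p.2 := fun p => by
    have : 0 ≤ G.adjMatrix ℝ p.1 p.2 := by
      rw [SimpleGraph.adjMatrix_apply]; split_ifs <;> norm_num
    exact mul_nonneg (mul_nonneg this (hξ p.1)) (hξ p.2)
  have hpair : ((a, b) : V × V) ≠ (b, a) := by simp [G.ne_of_adj hab]
  calc 2 * (ξ a * ξ b)
      = ∑ p ∈ {(a, b), (b, a)}, G.adjMatrix ℝ p.1 p.2 * ξ p.1 * ξ p.2 := by
        simp only [Finset.sum_pair hpair, SimpleGraph.adjMatrix_apply, hab, hab.symm, if_true]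
        ring
    _ ≤ ∑ p : V × V, G.adjMatrix ℝ p.1 p.2 * ξ p.1 * ξ p.2 :=
        Finset.sum_le_sum_of_subset_of_nonneg (Finset.subset_univ _) fun p _ _ => hterm p
    _ = ∑ i, ∑ j, G.adjMatrix ℝ i j * ξ i * ξ j := Fintype.sum_prod_type _

theorem mul_le_W_zero_of_adj {n : ℕ} {G : SimpleGraph (Fin n)} [DecidableRel G.Adj] {β : ℝ}
    (hβ : 0 ≤ β) {a b : Fin n} (hab : G.Adj a b) (ξ : Fin n → ℕ) :
    β * ((ξ a : ℝ) * ξ b) ≤ W G 0 β ξ := by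
  have h := G.two_mul_le_sum_adjMatrix_mul hab (ξ := fun i => (ξ i : ℝ)) fun i => by positivity
  simp only [W, zero_div, zero_mul, zero_add]
  nlinarith

theorem Function.update_add_eq_add_single {ι M : Type*} [DecidableEq ι] [AddMonoid M]
    (f : ι → M) (i : ι) (c : M) : Function.update f i (f i + c) = f + Pi.single i c := by
  funext j
  rcases eq_or_ne j i with rfl | hj
  · simp
  · simp [hj]

def alternatingPath {ι : Type*} [DecidableEq ι] (a b : ι) (k : ℕ) : ι → ℕ :=
  Pi.single a ((k + 1) / 2) + Pi.single b (k / 2)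

section alternatingPath

variable {ι : Type*} [DecidableEq ι] {a b : ι}

@[simp] theorem alternatingPath_zero : alternatingPath a b 0 = 0 := by
  simp [alternatingPath]

theorem alternatingPath_apply_left (hab : a ≠ b) (k : ℕ) :
    alternatingPath a b k a = (k + 1) / 2 := by
  simp [alternatingPath, hab]

theorem alternatingPath_apply_right (hab : a ≠ b) (k : ℕ) :
    alternatingPath a b k b = k / 2 := by
  simp [alternatingPath, hab.symm]

theorem alternatingPath_succ (k : ℕ) :
    ∃ i, alternatingPath a b (k + 1)
      = Function.update (alternatingPath a b k) i (alternatingPath a b k i + 1) := by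
  simp only [Function.update_add_eq_add_single, alternatingPath]
  rcases Nat.even_or_odd' k with ⟨q, rfl | rfl⟩
  · refine ⟨a, ?_⟩
    rw [show (2 * q + 1 + 1) / 2 = q + 1 by omega, show (2 * q + 1) / 2 = q by omega,
      show 2 * q / 2 = q by omega]
    simp only [Pi.single_add]
    abel
  · refine ⟨b, ?_⟩
    rw [show (2 * q + 1 + 1 + 1) / 2 = q + 1 by omega, show (2 * q + 1 + 1) / 2 = q + 1 by omega,
      show (2 * q + 1) / 2 = q by omega]
    simp only [Pi.single_add]
    abel

end alternatingPath

theorem sq_le_eight_mul_ceil_half_mul_floor_half {k : ℕ} (hk : 2 ≤ k) :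
    k ^ 2 ≤ 8 * ((k + 1) / 2 * (k / 2)) := by
  rcases Nat.even_or_odd' k with ⟨q, rfl | rfl⟩
  · rw [show (2 * q + 1) / 2 = q by omega, show 2 * q / 2 = q by omega]; nlinarith
  · rw [show (2 * q + 1 + 1) / 2 = q + 1 by omega, show (2 * q + 1) / 2 = q by omega]
    nlinarith

theorem Real.summable_exp_neg_of_mul_sq_le {f : ℕ → ℝ} {c : ℝ} (hc : 0 < c) {K : ℕ}
    (hf : ∀ k, K ≤ k → c * (k : ℝ) ^ 2 ≤ f k) : Summable fun k => exp (-f k) := by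
  refine (Real.summable_exp_nat_mul_iff.mpr (neg_lt_zero.mpr hc)).of_norm_bounded_eventually_nat ?_
  filter_upwards [Filter.eventually_ge_atTop K] with k hk
  rw [Real.norm_of_nonneg (exp_nonneg _), Real.exp_le_exp]
  have : (k : ℝ) ≤ (k : ℝ) ^ 2 := by exact_mod_cast Nat.le_self_pow two_ne_zero k
  nlinarith [hf k hk]

/-- If `α = 0`, `β > 0` and `G` has at least one edge, there is a path `(y_k)` in `ℤ₊ⁿ`
starting at `0` and increasing one coordinate by `1` at each step, a constant `c₁ > 0` and
`K` such that `W(y_k) ≥ c₁ k²` for `k ≥ K`; consequently `Σ_k e^{−W(y_k)} < ∞`. -/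
theorem stmt11 {n : ℕ} (G : SimpleGraph (Fin n)) [DecidableRel G.Adj]
    (α β : ℝ) (hα : α = 0) (hβ : 0 < β) (hedge : 0 < G.edgeFinset.card) :
    ∃ y : ℕ → (Fin n → ℕ),
      y 0 = 0
      ∧ (∀ k : ℕ, ∃ i : Fin n, y (k + 1) = Function.update (y k) i (y k i + 1))
      ∧ (∃ c₁ : ℝ, 0 < c₁ ∧ ∃ K : ℕ, ∀ k : ℕ, K ≤ k → c₁ * (k : ℝ) ^ 2 ≤ W G α β (y k))
      ∧ Summable (fun k : ℕ => Real.exp (-W G α β (y k))) := by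
  subst hα
  obtain ⟨a, b, hab⟩ := SimpleGraph.ne_bot_iff_exists_adj.mp
    (G.edgeFinset_nonempty.mp (Finset.card_pos.mp hedge))
  have hne := G.ne_of_adj hab
  have hquad : ∀ k : ℕ, 2 ≤ k → β / 8 * (k : ℝ) ^ 2 ≤ W G 0 β (alternatingPath a b k) := by
    intro k hk
    have hW := mul_le_W_zero_of_adj hβ.le hab (alternatingPath a b k)
    rw [alternatingPath_apply_left hne, alternatingPath_apply_right hne] at hW
    have hsq : (k : ℝ) ^ 2 ≤ 8 * (((k + 1) / 2 : ℕ) * ((k / 2 : ℕ) : ℝ)) := by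
      exact_mod_cast sq_le_eight_mul_ceil_half_mul_floor_half hk
    nlinarith
  exact ⟨alternatingPath a b, alternatingPath_zero, alternatingPath_succ,
    ⟨β / 8, by positivity, 2, hquad⟩, Real.summable_exp_neg_of_mul_sq_le (by positivity) hquad⟩
end

section
/- Fix α, β ∈ ℝ. For every ξ ∈ ℤ₊ⁿ and every index i ∈ {1,…,n}, the modified-model detailed balance identity e^{α ξᵢ} · e^{W(ξ)} = e^{−β (Aξ)ᵢ} · e^{W(ξ + eᵢ)} holds, where (Aξ)ᵢ = (A(ξ+eᵢ))ᵢ since a_{ii} = 0. (Hence μ(ξ) = e^{W(ξ)} is reversible/invariant for the chain with birth rate e^{α ξᵢ} and death rate e^{−β (Aξ)ᵢ}.) -/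
/-! The identity amounts to `W(ξ + eᵢ) - W(ξ) = α ξᵢ + β (Aξ)ᵢ`: raising `ξᵢ` by one adds
`2 ξᵢ` to `Σ ξⱼ(ξⱼ - 1)`, and, since `A` is symmetric with zero diagonal, adds `2 (Aξ)ᵢ` to
the quadratic form `ξ ⬝ Aξ`. -/

open Finset Real

theorem natCast_update_succ {ι R : Type*} [DecidableEq ι] [AddMonoidWithOne R]
    (ξ : ι → ℕ) (i : ι) :
    (fun j => ((Function.update ξ i (ξ i + 1) j : ℕ) : R))
      = (fun j => (ξ j : R)) + Pi.single i 1 := by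
  ext j
  rcases eq_or_ne j i with rfl | hj <;> simp [*]

section

open Matrix

variable {ι R : Type*} [Fintype ι] [CommRing R]

theorem sum_sum_mul_mul_eq_dotProduct_mulVec (A : Matrix ι ι R) (x : ι → R) :
    ∑ i, ∑ j, A i j * x i * x j = x ⬝ᵥ A *ᵥ x := by
  simp only [dotProduct, mulVec, mul_sum]
  exact sum_congr rfl fun i _ => sum_congr rfl fun j _ => by ring

variable [DecidableEq ι]

theorem sum_mul_sub_one_add_single (x : ι → R) (i : ι) :
    ∑ j, (x + Pi.single i 1 : ι → R) j * ((x + Pi.single i 1 : ι → R) j - 1)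
      = ∑ j, x j * (x j - 1) + 2 * x i := by
  have hpt : ∀ j, (x + Pi.single i 1 : ι → R) j * ((x + Pi.single i 1 : ι → R) j - 1)
      = x j * (x j - 1) + if j = i then 2 * x i else 0 := by
    intro j
    rcases eq_or_ne j i with rfl | hj
    · simp only [Pi.add_apply, Pi.single_eq_same, ↓reduceIte]; ring
    · simp [hj]
  simp only [hpt, sum_add_distrib, sum_ite_eq', mem_univ, if_true]

theorem _root_.Matrix.IsSymm.dotProduct_mulVec_add_single {A : Matrix ι ι R} (hA : A.IsSymm)
    (x : ι → R) (i : ι) :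
    (x + Pi.single i 1) ⬝ᵥ A *ᵥ (x + Pi.single i 1)
      = x ⬝ᵥ A *ᵥ x + 2 * (A *ᵥ x) i + A i i := by
  have hcol : x ⬝ᵥ A.col i = (A *ᵥ x) i := by
    rw [dotProduct_comm]
    exact sum_congr rfl fun j _ => by rw [col_apply, hA.apply]
  simp only [mulVec_add, dotProduct_add, add_dotProduct, single_dotProduct, one_mul,
    mulVec_single_one, hcol, col_apply]
  ring

end

section

open Matrix

variable {n : ℕ}

noncomputable def energy (G : SimpleGraph (Fin n)) [DecidableRel G.Adj] (α β : ℝ)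
    (x : Fin n → ℝ) : ℝ :=
  α / 2 * ∑ i, x i * (x i - 1) + β / 2 * (x ⬝ᵥ G.adjMatrix ℝ *ᵥ x)

theorem W_eq_energy (G : SimpleGraph (Fin n)) [DecidableRel G.Adj] (α β : ℝ) (ξ : Fin n → ℕ) :
    W G α β ξ = energy G α β (fun j => (ξ j : ℝ)) := by
  rw [W, energy, sum_sum_mul_mul_eq_dotProduct_mulVec]

theorem energy_add_single (G : SimpleGraph (Fin n)) [DecidableRel G.Adj] (α β : ℝ)
    (x : Fin n → ℝ) (i : Fin n) :
    energy G α β (x + Pi.single i 1) = energy G α β x + α * x i + β * (G.adjMatrix ℝ *ᵥ x) i := by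
  rw [energy, energy, sum_mul_sub_one_add_single, G.isSymm_adjMatrix.dotProduct_mulVec_add_single,
    SimpleGraph.adjMatrix_apply, if_neg (G.irrefl (v := i))]
  ring

theorem W_update_succ (G : SimpleGraph (Fin n)) [DecidableRel G.Adj] (α β : ℝ)
    (ξ : Fin n → ℕ) (i : Fin n) :
    W G α β (Function.update ξ i (ξ i + 1))
      = W G α β ξ + α * ξ i + β * (G.adjMatrix ℝ *ᵥ fun j => (ξ j : ℝ)) i := by
  rw [W_eq_energy, W_eq_energy, natCast_update_succ, energy_add_single]

end

/-- Detailed balance for the modified model: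
`e^{α ξᵢ} · e^{W(ξ)} = e^{−β (Aξ)ᵢ} · e^{W(ξ + eᵢ)}`. -/
theorem stmt15 {n : ℕ} (G : SimpleGraph (Fin n)) [DecidableRel G.Adj]
    (α β : ℝ) (ξ : Fin n → ℕ) (i : Fin n) :
    Real.exp (α * (ξ i : ℝ)) * Real.exp (W G α β ξ)
      = Real.exp (-β * (G.adjMatrix ℝ).mulVec (fun j => (ξ j : ℝ)) i)
          * Real.exp (W G α β (Function.update ξ i (ξ i + 1))) := by
  rw [W_update_succ, ← exp_add, ← exp_add]
  congr 1
  ring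
end

section
/- For all real numbers x ≥ 2 and y ≥ 2, log(x² + (y−1)² − ½) + log((x−1)² + y² − ½) + log((x−2)² + (y−1)² − ½) + log((x−1)² + (y−2)² − ½) − 4 log((x−1)² + (y−1)² − ½) = log( 1 − 64 (x−y)² (x+y−2)² / (2x² + 2y² − 4x − 4y + 3)⁴ ) ≤ 0. (This is the generator computation showing f(ξ) = log(‖ξ − e‖² − n + 3/2) is a Lyapunov function for the hard-core chain at states with two positive coordinates.) -/
/-!
Writing `D = (x-1)² + (y-1)² - ½` for the value at the centre, the four neighbouring values are
`D + 1 ± 2(x-1)` and `D + 1 ± 2(y-1)`, and their product is `D⁴ - 4(x-y)²(x+y-2)²`. Since the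
denominator on the right is `2D`, the left-hand side is the logarithm of that product over `D⁴`,
a number in `(0, 1]`.
-/

open Real

lemma log_mul_mul_mul_div_pow_four {p q r s d : ℝ} (hp : 0 < p) (hq : 0 < q) (hr : 0 < r)
    (hs : 0 < s) (hd : 0 < d) :
    log (p * q * r * s / d ^ 4) = log p + log q + log r + log s - 4 * log d := by
  rw [log_div (by positivity) (by positivity), log_pow, log_mul (by positivity) hs.ne',
    log_mul (by positivity) hr.ne', log_mul hp.ne' hq.ne']
  push_cast
  ring

lemma neighbour_prod_div_centre_pow_four (x y : ℝ) (hD : (x - 1) ^ 2 + (y - 1) ^ 2 - 1 / 2 ≠ 0) :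
    (x ^ 2 + (y - 1) ^ 2 - 1 / 2) * ((x - 1) ^ 2 + y ^ 2 - 1 / 2)
        * ((x - 2) ^ 2 + (y - 1) ^ 2 - 1 / 2) * ((x - 1) ^ 2 + (y - 2) ^ 2 - 1 / 2)
        / ((x - 1) ^ 2 + (y - 1) ^ 2 - 1 / 2) ^ 4
      = 1 - 64 * (x - y) ^ 2 * (x + y - 2) ^ 2
          / (2 * x ^ 2 + 2 * y ^ 2 - 4 * x - 4 * y + 3) ^ 4 := by
  rw [show 2 * x ^ 2 + 2 * y ^ 2 - 4 * x - 4 * y + 3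
      = 2 * ((x - 1) ^ 2 + (y - 1) ^ 2 - 1 / 2) by ring]
  generalize hd : (x - 1) ^ 2 + (y - 1) ^ 2 - 1 / 2 = d at hD ⊢
  field_simp
  rw [← hd]
  ring

lemma sq_add_sq_sub_half_pos (u : ℝ) {v : ℝ} (hv : 1 ≤ v) : 0 < u ^ 2 + v ^ 2 - 1 / 2 := by
  nlinarith [sq_nonneg u]

/-- The generator computation for the hard-core Lyapunov function at states with two
positive coordinates: for `x, y ≥ 2`,
`log(x²+(y−1)²−½) + log((x−1)²+y²−½) + log((x−2)²+(y−1)²−½) + log((x−1)²+(y−2)²−½)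
  − 4 log((x−1)²+(y−1)²−½)
  = log(1 − 64(x−y)²(x+y−2)²/(2x²+2y²−4x−4y+3)⁴) ≤ 0`. -/
theorem stmt16 (x y : ℝ) (hx : 2 ≤ x) (hy : 2 ≤ y) :
    (Real.log (x ^ 2 + (y - 1) ^ 2 - 1 / 2) + Real.log ((x - 1) ^ 2 + y ^ 2 - 1 / 2)
        + Real.log ((x - 2) ^ 2 + (y - 1) ^ 2 - 1 / 2)
        + Real.log ((x - 1) ^ 2 + (y - 2) ^ 2 - 1 / 2)
        - 4 * Real.log ((x - 1) ^ 2 + (y - 1) ^ 2 - 1 / 2)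
      = Real.log (1 - 64 * (x - y) ^ 2 * (x + y - 2) ^ 2
            / (2 * x ^ 2 + 2 * y ^ 2 - 4 * x - 4 * y + 3) ^ 4))
    ∧ Real.log (1 - 64 * (x - y) ^ 2 * (x + y - 2) ^ 2
          / (2 * x ^ 2 + 2 * y ^ 2 - 4 * x - 4 * y + 3) ^ 4) ≤ 0 := by
  have hA := sq_add_sq_sub_half_pos x (by linarith : 1 ≤ y - 1)
  have hB := sq_add_sq_sub_half_pos (x - 1) (by linarith : 1 ≤ y)
  have hC := sq_add_sq_sub_half_pos (x - 2) (by linarith : 1 ≤ y - 1)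
  have hE : 0 < (x - 1) ^ 2 + (y - 2) ^ 2 - 1 / 2 := by
    linarith [sq_add_sq_sub_half_pos (y - 2) (by linarith : 1 ≤ x - 1)]
  have hD := sq_add_sq_sub_half_pos (x - 1) (by linarith : 1 ≤ y - 1)
  rw [← neighbour_prod_div_centre_pow_four x y hD.ne']
  refine ⟨(log_mul_mul_mul_div_pow_four hA hB hC hE hD).symm, log_nonpos (by positivity) ?_⟩
  rw [neighbour_prod_div_centre_pow_four x y hD.ne', sub_le_self_iff]
  positivity
end
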